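/- Call an n×n matrix T over a commutative ring lower-unipotent if T is lower triangular with all diagonal entries equal to 1. Let P_k(a) be the identity matrix modified so that its 2×2 submatrix in rows and columns k, k+1 is [[0,1],[1,a]]. If T is lower-unipotent, then the matrix T' = P_k(a + T_{k+1,k})⁻¹ · T · P_k(a) is again lower-unipotent. -/

import Mathlib

/-- The `n×n` path matrix `P_k(a)`: the identity matrix with the `2×2` submatrix in
rows and columns `k, k+1` replaced by `[[0,1],[1,a]]`.  Here `k` and `k'` stand for
the indices `k` and `k+1`. -/
def pathMat {R : Type*} [CommRing R] {n : ℕ} (k k' : Fin n) (a : R) :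
    Matrix (Fin n) (Fin n) R := fun i j =>
  if i = k then (if j = k' then 1 else 0)
  else if i = k' then (if j = k then 1 else if j = k' then a else 0)
  else (if i = j then 1 else 0)

/-- A square matrix is lower-unipotent if it is lower triangular with all diagonal
entries equal to `1`. -/
def LowerUnipotent {R : Type*} [CommRing R] {n : ℕ} (T : Matrix (Fin n) (Fin n) R) : Prop :=
  (∀ i j : Fin n, i < j → T i j = 0) ∧ (∀ i : Fin n, T i i = 1)

/-!
Write `σ` for the transposition of `k` and `k + 1`. Then `P_k(a) = σ + a E_{k+1,k+1}` and
`P_k(b)⁻¹ = σ - b E_{k,k}`, so `T'` is `σ T σ` corrected in column `k + 1` and row `k`.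
Conjugating by an adjacent transposition preserves the order of every pair of indices except
`(k, k + 1)`, so `σ T σ` is lower unipotent up to its `(k, k + 1)` entry `T_{k+1,k}`. The
corrections do not disturb the diagonal or the other upper entries, and at `(k, k + 1)` they
add `a - b`, which cancels `T_{k+1,k}` exactly when `b = a + T_{k+1,k}`.
-/

open Matrix Equiv

theorem Equiv.swap_lt_swap_of_covBy {α : Type*} [LinearOrder α] {k k' i j : α}
    (hk : k ⋖ k') (hij : i < j) (hne : ¬(i = k ∧ j = k')) : swap k k' i < swap k k' j := by
  have := hk.lt
  have := hk.le_of_lt (c := i)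
  have := hk.le_of_lt (c := j)
  rw [swap_apply_def, swap_apply_def]
  split_ifs <;> grind

section
variable {R : Type*} [CommRing R] {n : ℕ} {k k' : Fin n}

theorem pathMat_eq_permMatrix_add_single (h : k ≠ k') (a : R) :
    pathMat k k' a = (swap k k').permMatrix R + single k' k' a := by
  ext i j
  simp only [pathMat, Matrix.add_apply, PEquiv.toMatrix_apply, single_apply, toPEquiv_apply,
    swap_apply_def, Option.mem_def, Option.some.injEq]
  split_ifs <;> grind

theorem mul_pathMat_apply (h : k ≠ k') (a : R) (M : Matrix (Fin n) (Fin n) R) (i j : Fin n) :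
    (M * pathMat k k' a) i j = M i (swap k k' j) + if j = k' then M i k' * a else 0 := by
  rw [pathMat_eq_permMatrix_add_single h, Matrix.mul_add, Matrix.add_apply,
    PEquiv.mul_toMatrix_toPEquiv, submatrix_apply, symm_swap, id]
  split_ifs with hj
  · rw [hj, mul_single_apply_same]
  · simp [hj]

theorem inv_pathMat (h : k ≠ k') (b : R) :
    (pathMat k k' b)⁻¹ = (swap k k').permMatrix R - single k k b := by
  refine inv_eq_left_inv ?_
  ext i j
  simp only [mul_pathMat_apply h, Matrix.sub_apply, PEquiv.toMatrix_apply, single_apply,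
    toPEquiv_apply, Option.mem_def, Option.some.injEq, one_apply, swap_apply_def]
  split_ifs <;> grind

theorem inv_pathMat_mul_apply (h : k ≠ k') (b : R) (M : Matrix (Fin n) (Fin n) R) (i j : Fin n) :
    ((pathMat k k' b)⁻¹ * M) i j = M (swap k k' i) j - if i = k then b * M k j else 0 := by
  rw [inv_pathMat h, Matrix.sub_mul, Matrix.sub_apply, PEquiv.toMatrix_toPEquiv_mul,
    submatrix_apply, id]
  split_ifs with hi
  · rw [hi, single_mul_apply_same]
  · rw [single_mul_apply_of_ne _ _ _ _ _ hi, sub_zero]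

end

theorem LowerUnipotent.inv_pathMat_mul_mul_pathMat {R : Type*} [CommRing R] {n : ℕ}
    {T : Matrix (Fin n) (Fin n) R} (hT : LowerUnipotent T) {k k' : Fin n} (hk : k ⋖ k') (a : R) :
    LowerUnipotent ((pathMat k k' (a + T k' k))⁻¹ * T * pathMat k k' a) := by
  obtain ⟨hzero, hone⟩ := hT
  have hne := hk.ne
  rw [Matrix.mul_assoc]
  refine ⟨fun i j hij => ?_, fun i => ?_⟩
  · rw [inv_pathMat_mul_apply hne, mul_pathMat_apply hne, mul_pathMat_apply hne]
    by_cases hcorner : i = k ∧ j = k'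
    · obtain ⟨rfl, rfl⟩ := hcorner
      simp [hone, hzero _ _ hk.lt, add_comm]
    rw [hzero _ _ (swap_lt_swap_of_covBy hk hij hcorner), zero_add]
    rcases eq_or_ne j k' with rfl | hj
    · have hik : i < k := (hk.le_of_lt hij).lt_of_ne fun h => hcorner ⟨h, rfl⟩
      simp [hik.ne, hij.ne, swap_apply_of_ne_of_ne, hzero _ _ hij]
    · rcases eq_or_ne i k with rfl | hi
      · simp [hj, hij.ne', swap_apply_of_ne_of_ne, hzero _ _ hij]
      · simp [hi, hj]
  · rw [inv_pathMat_mul_apply hne, mul_pathMat_apply hne, mul_pathMat_apply hne, hone]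
    rcases eq_or_ne i k with rfl | hi
    · simp [hne, hzero _ _ hk.lt]
    rcases eq_or_ne i k' with rfl | hi'
    · simp [hi, hzero _ _ hk.lt]
    · simp [hi, hi']

/-- If `T` is lower-unipotent, then `P_k(a + T_{k+1,k})⁻¹ · T · P_k(a)` is again
lower-unipotent. -/
theorem lowerUnipotent_conjugate {R : Type*} [CommRing R] {n : ℕ} (k : ℕ)
    (hk : k + 1 < n) (a : R) (T : Matrix (Fin n) (Fin n) R) (hT : LowerUnipotent T) :
    LowerUnipotent
      ((pathMat (⟨k, by omega⟩ : Fin n) ⟨k + 1, hk⟩ (a + T ⟨k + 1, hk⟩ ⟨k, by omega⟩))⁻¹ *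
        T * pathMat (⟨k, by omega⟩ : Fin n) ⟨k + 1, hk⟩ a) :=
  hT.inv_pathMat_mul_mul_pathMat (by simp) a
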